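/- arXiv:2010.13831 — 3 statements merged into one kernel-verified Lean document; each statement's English description precedes it below -/
import Mathlib

section
/- Let G = (V, E, w) be a weighted undirected graph with nonnegative edge weights, and partition V into tiers T_j = {v : 2^j ≤ deg(v) < 2^{j+1}} for 0 ≤ j < ⌈log|V|⌉. Define d_{≤i}(u,v) as the length of the shortest path between u and v using only edges incident to at least one node of T_{≤i} = ∪_{k≤i} T_k. Then for any v ∈ T_i and u ∈ T_{≤i}, the true distance satisfies d(v,u) = min{ d_{≤i}(v,u), min_{w ∈ T_{>i}} ( d(v,w) + d_{≤i}(w,u) ) }. -/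
open scoped ENNReal

/-- Weight of a walk: sum of the weights of its edges. -/
noncomputable def walkWeight {V : Type} {G : SimpleGraph V} (w : Sym2 V → ℝ≥0∞)
    {a b : V} (p : G.Walk a b) : ℝ≥0∞ :=
  (p.edges.map w).sum

/-- Weighted shortest-path distance: infimum of walk weights (`⊤` if disconnected). -/
noncomputable def wdist {V : Type} (G : SimpleGraph V) (w : Sym2 V → ℝ≥0∞)
    (a b : V) : ℝ≥0∞ :=
  ⨅ p : G.Walk a b, walkWeight w p

/-- Shortest-path distance restricted to walks all of whose edges are incident
to a vertex satisfying `P`. -/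
noncomputable def rdist {V : Type} (G : SimpleGraph V) (w : Sym2 V → ℝ≥0∞)
    (P : V → Prop) (a b : V) : ℝ≥0∞ :=
  ⨅ p : {p : G.Walk a b // ∀ e ∈ p.edges, ∃ x ∈ e, P x}, walkWeight w p.1

/-- Membership in the union of tiers `T_j`, `j ≤ i`, where
`T_j = {v : 2^j ≤ deg v < 2^{j+1}}`. -/
def tierLE {V : Type} [Fintype V] (G : SimpleGraph V) [DecidableRel G.Adj]
    (i : ℕ) (x : V) : Prop :=
  ∃ j ≤ i, 2 ^ j ≤ G.degree x ∧ G.degree x < 2 ^ (j + 1)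

/-! Cutting a walk after its last edge with no endpoint in `T_{≤i}` splits it into a walk ending at
a non-isolated vertex outside `T_{≤i}`, i.e. of degree at least `2^{i+1}`, followed by a walk all
of whose edges touch `T_{≤i}`. Conversely, concatenating such walks gives walks from `v` to `u`. -/

namespace SimpleGraph

variable {V : Type} {G : SimpleGraph V} (w : Sym2 V → ℝ≥0∞)

@[simp]
lemma walkWeight_cons {a b c : V} (h : G.Adj a b) (p : G.Walk b c) :
    walkWeight w (Walk.cons h p) = w s(a, b) + walkWeight w p := by
  simp [walkWeight]

@[simp]
lemma walkWeight_append {a b c : V} (p : G.Walk a b) (q : G.Walk b c) :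
    walkWeight w (p.append q) = walkWeight w p + walkWeight w q := by
  simp [walkWeight]

lemma wdist_le_walkWeight {a b : V} (p : G.Walk a b) : wdist G w a b ≤ walkWeight w p :=
  iInf_le _ p

lemma wdist_le_rdist (P : V → Prop) (a b : V) : wdist G w a b ≤ rdist G w P a b :=
  le_iInf fun p => wdist_le_walkWeight w p.1

lemma wdist_triangle (a b c : V) : wdist G w a c ≤ wdist G w a b + wdist G w b c := by
  simp only [wdist, ENNReal.iInf_add]
  refine le_iInf fun p => ?_
  rw [ENNReal.add_iInf]
  exact le_iInf fun q => (wdist_le_walkWeight w (p.append q)).trans_eq (walkWeight_append w p q)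

lemma Walk.incident_or_exists_split (P : V → Prop) {a b : V} (p : G.Walk a b) :
    (∀ e ∈ p.edges, ∃ y ∈ e, P y) ∨
      ∃ x, ¬P x ∧ (∃ y, G.Adj x y) ∧ ∃ (q : G.Walk a x) (r : G.Walk x b),
        (∀ e ∈ r.edges, ∃ y ∈ e, P y) ∧ walkWeight w p = walkWeight w q + walkWeight w r := by
  induction p with
  | nil => exact Or.inl (by simp)
  | @cons a c b hac q ih =>
    rcases ih with hq | ⟨x, hx, hadj, q', r, hr, hweight⟩
    · by_cases hedge : P a ∨ P c
      · refine Or.inl fun e he => ?_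
        rcases List.mem_cons.1 (Walk.edges_cons hac q ▸ he) with rfl | he
        · rcases hedge with ha | hc
          exacts [⟨a, by simp, ha⟩, ⟨c, by simp, hc⟩]
        · exact hq e he
      · push Not at hedge
        exact Or.inr ⟨c, hedge.2, ⟨a, hac.symm⟩, Walk.cons hac Walk.nil, q, hq, by simp [walkWeight]⟩
    · exact Or.inr ⟨x, hx, hadj, Walk.cons hac q', r, hr, by simp [hweight, add_assoc]⟩

theorem wdist_eq_min_rdist_iInf (P Q : V → Prop) (hQ : ∀ x, ¬P x → (∃ y, G.Adj x y) → Q x)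
    (a b : V) :
    wdist G w a b =
      min (rdist G w P a b) (⨅ x : {x // Q x}, wdist G w a x + rdist G w P x b) := by
  refine le_antisymm ?_ (le_iInf fun p => ?_)
  · exact le_min (wdist_le_rdist w P a b) (le_iInf fun x =>
      (wdist_triangle w a x b).trans (add_le_add_right (wdist_le_rdist w P x b) _))
  · rcases Walk.incident_or_exists_split w P p with hp | ⟨x, hx, hadj, q, r, hr, hweight⟩
    · exact (min_le_left _ _).trans (iInf_le_of_le ⟨p, hp⟩ le_rfl)
    · refine (min_le_right _ _).trans (iInf_le_of_le ⟨x, hQ x hx hadj⟩ ?_)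
      rw [hweight]
      exact add_le_add (wdist_le_walkWeight w q) (iInf_le_of_le ⟨r, hr⟩ le_rfl)

lemma le_degree_of_not_tierLE [Fintype V] [DecidableRel G.Adj] {i : ℕ} {x : V}
    (hx : ¬tierLE G i x) (hdeg : G.degree x ≠ 0) : 2 ^ (i + 1) ≤ G.degree x := by
  by_contra! hlt
  refine hx ⟨Nat.log 2 (G.degree x), ?_, Nat.pow_log_le_self 2 hdeg,
    Nat.lt_pow_succ_log_self (by norm_num) _⟩
  have := Nat.log_lt_of_lt_pow hdeg hlt
  omega

end SimpleGraph

theorem stmt_2_general {V : Type} [Fintype V] (G : SimpleGraph V) [DecidableRel G.Adj]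
    (w : Sym2 V → ℝ≥0∞) (i : ℕ)
    (v u : V) :
    wdist G w v u =
      min (rdist G w (tierLE G i) v u)
        (⨅ x : {x : V // 2 ^ (i + 1) ≤ G.degree x},
          wdist G w v x + rdist G w (tierLE G i) x u) :=
  SimpleGraph.wdist_eq_min_rdist_iInf w _ _ (fun x hx hadj =>
    SimpleGraph.le_degree_of_not_tierLE hx ((G.degree_pos_iff_exists_adj x).2 hadj).ne') v u

/-- for `v ∈ T_i` and `u ∈ T_{≤i}`,
`d(v,u) = min( d_{≤i}(v,u), min_{w ∈ T_{>i}} d(v,w) + d_{≤i}(w,u) )`. -/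
theorem stmt_2 {V : Type} [Fintype V] (G : SimpleGraph V) [DecidableRel G.Adj]
    (w : Sym2 V → ℝ≥0∞) (i : ℕ)
    (hi : i + 1 ≤ Nat.clog 2 (Fintype.card V))
    (v u : V)
    (hv : 2 ^ i ≤ G.degree v ∧ G.degree v < 2 ^ (i + 1))
    (hu : tierLE G i u) :
    wdist G w v u =
      min (rdist G w (tierLE G i) v u)
        (⨅ x : {x : V // 2 ^ (i + 1) ≤ G.degree x},
          wdist G w v x + rdist G w (tierLE G i) x u) :=
  stmt_2_general G w i v u
end

section
/- Let G be an unweighted connected graph, v a node, ecc(v) = max_{u} d(v,u) its eccentricity, ε > 0, and h ≥ 1 an integer. Let M ⊆ V be a set of nodes such that every node on any shortest path from v to the farthest node u has a node of M within the last h hops of the path (i.e. some w ∈ M on a shortest v-u path with d(w,u) ≤ h). Define ẽcc(v) := max{ max_{w ∈ M} d(v,w), max_{x : d(v,x) ≤ (1+1/ε)h} d(v,x) }. Then ẽcc(v) ≤ ecc(v), and ẽcc(v) ≥ ecc(v)/(1+ε). -/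
/-!
Let `u` be a farthest node from `v`. If `d(v,u) ≤ (1 + 1/ε) h`, then `u` itself is explored and
the estimate is exact. Otherwise the node `w ∈ M` near the end of a shortest `v`-`u` path has
`d(v,w) ≥ ecc(v) - h`, and `h < ecc(v) · ε/(1+ε)` turns this into `d(v,w) ≥ ecc(v)/(1+ε)`.
-/

open Finset

theorem div_one_add_le_of_le_add {a b c ε : ℝ} (hε : 0 < ε) (hab : a ≤ b + c)
    (hca : (1 + 1 / ε) * c ≤ a) : a / (1 + ε) ≤ b := by
  have hc : (1 + ε) * c ≤ ε * a := by
    calc (1 + ε) * c = ε * ((1 + 1 / ε) * c) := by field_simp; ring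
      _ ≤ ε * a := by gcongr
  rw [div_le_iff₀ (by linarith)]
  nlinarith

section ApproxSup

variable {α : Type*} [Fintype α] (f : α → ℕ) (M : Finset α)

/-- The paper's `ẽcc(v)` is `approxSup (G.dist v) M ((1 + 1/ε) h)`. -/
noncomputable def approxSup (r : ℝ) : ℕ :=
  max (M.sup f) ((univ.filter fun x => (f x : ℝ) ≤ r).sup f)

theorem approxSup_le_sup (r : ℝ) : approxSup f M r ≤ univ.sup f :=
  max_le (sup_mono (subset_univ M)) (sup_mono (filter_subset _ _))

theorem sup_div_one_add_le_approxSup [Nonempty α] {ε : ℝ} (hε : 0 < ε) (h : ℕ)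
    (hM : ∀ u, univ.sup f = f u → ∃ w ∈ M, f u ≤ f w + h) :
    ((univ.sup f : ℕ) : ℝ) / (1 + ε) ≤ approxSup f M ((1 + 1 / ε) * h) := by
  obtain ⟨u, -, hu⟩ := exists_mem_eq_sup univ univ_nonempty f
  rw [hu]
  by_cases hnear : (f u : ℝ) ≤ (1 + 1 / ε) * h
  · have hu_le : f u ≤ approxSup f M ((1 + 1 / ε) * h) :=
      le_max_of_le_right (le_sup (mem_filter.2 ⟨mem_univ u, hnear⟩))
    calc (f u : ℝ) / (1 + ε) ≤ f u := div_le_self (Nat.cast_nonneg _) (by linarith)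
      _ ≤ _ := by exact_mod_cast hu_le
  · obtain ⟨w, hwM, huw⟩ := hM u hu
    have hw_le : f w ≤ approxSup f M ((1 + 1 / ε) * h) := le_max_of_le_left (le_sup hwM)
    calc (f u : ℝ) / (1 + ε) ≤ f w :=
          div_one_add_le_of_le_add hε (by exact_mod_cast huw) (le_of_not_ge hnear)
      _ ≤ _ := by exact_mod_cast hw_le

end ApproxSup

theorem stmt_5_general {V : Type} [Fintype V] (G : SimpleGraph V)
    (v : V) (ε : ℝ) (hε : 0 < ε) (h : ℕ) (M : Finset V)
    (hM : ∀ u : V, Finset.univ.sup (G.dist v) = G.dist v u →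
      ∃ w ∈ M, G.dist v w + G.dist w u = G.dist v u ∧ G.dist w u ≤ h) :
    let ecc : ℕ := Finset.univ.sup (G.dist v)
    let tecc : ℕ := max (M.sup (G.dist v))
      ((Finset.univ.filter fun x : V => (G.dist v x : ℝ) ≤ (1 + 1 / ε) * (h : ℝ)).sup
        (G.dist v))
    (tecc : ℝ) ≤ (ecc : ℝ) ∧ (ecc : ℝ) / (1 + ε) ≤ (tecc : ℝ) := by
  have : Nonempty V := ⟨v⟩
  have hfarthest : ∀ u, univ.sup (G.dist v) = G.dist v u → ∃ w ∈ M, G.dist v u ≤ G.dist v w + h := by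
    intro u hu
    obtain ⟨w, hwM, hpath, hwu⟩ := hM u hu
    exact ⟨w, hwM, by omega⟩
  exact ⟨by exact_mod_cast approxSup_le_sup _ M _, sup_div_one_add_le_approxSup _ M hε h hfarthest⟩

/-- (1+ε)-approximation of the unweighted eccentricity of `v`:
`ẽcc(v) = max( max_{w ∈ M} d(v,w), max_{x : d(v,x) ≤ (1+1/ε)h} d(v,x) )`
satisfies `ecc(v)/(1+ε) ≤ ẽcc(v) ≤ ecc(v)`, provided every farthest node `u` has a
node of `M` on some shortest `v`-`u` path within the last `h` hops. -/
theorem stmt_5 {V : Type} [Fintype V] (G : SimpleGraph V) (hconn : G.Connected)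
    (v : V) (ε : ℝ) (hε : 0 < ε) (h : ℕ) (hh : 1 ≤ h) (M : Finset V)
    (hM : ∀ u : V, Finset.univ.sup (G.dist v) = G.dist v u →
      ∃ w ∈ M, G.dist v w + G.dist w u = G.dist v u ∧ G.dist w u ≤ h) :
    let ecc : ℕ := Finset.univ.sup (G.dist v)
    let tecc : ℕ := max (M.sup (G.dist v))
      ((Finset.univ.filter fun x : V => (G.dist v x : ℝ) ≤ (1 + 1 / ε) * (h : ℝ)).sup
        (G.dist v))
    (tecc : ℝ) ≤ (ecc : ℝ) ∧ (ecc : ℝ) / (1 + ε) ≤ (tecc : ℝ) :=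
  stmt_5_general G v ε hε h M hM
end

section
/- Let G = (V,E,w) be a connected weighted undirected graph with nonnegative weights, u ∈ V, and M ⊆ V a set of nodes and h ≥ 1 such that the farthest node p from u (ecc(u) = d(u,p)) has some node p' ∈ M with hop(p,p') ≤ h. For v ∈ M define ecc_h(v) := max_{x ∈ N^h(v)} d(v,x), where N^h(v) is the h-hop neighborhood of v. Then the value ẽcc(u) := (1/3)·max_{v ∈ M} ( d(u,v) + ecc_h(v) ) satisfies ecc(u)/3 ≤ ẽcc(u) ≤ ecc(u). -/
namespace SimpleGraph

variable {V : Type} (G : SimpleGraph V) (d : V → V → ℝ) (h : ℕ)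

noncomputable def hopEcc (v : V) : ℝ :=
  sSup {t : ℝ | ∃ x : V, G.dist v x ≤ h ∧ t = d v x}

variable {G d h}

theorem le_hopEcc [Finite V] {v x : V} (hx : G.dist v x ≤ h) : d v x ≤ G.hopEcc d h v := by
  refine le_csSup ((Set.finite_range (d v)).subset ?_).bddAbove ⟨x, hx, rfl⟩
  rintro t ⟨y, -, rfl⟩
  exact ⟨y, rfl⟩

theorem hopEcc_le {v : V} {b : ℝ} (hb : ∀ x, G.dist v x ≤ h → d v x ≤ b) :
    G.hopEcc d h v ≤ b := by
  refine csSup_le ⟨d v v, v, by simp, rfl⟩ ?_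
  rintro t ⟨x, hx, rfl⟩
  exact hb x hx

theorem le_add_hopEcc_of_dist_le [Finite V] (htri : ∀ a b c, d a c ≤ d a b + d b c)
    {u p p' : V} (hpp' : G.dist p p' ≤ h) :
    d u p ≤ d u p' + G.hopEcc d h p' :=
  calc d u p ≤ d u p' + d p' p := htri u p' p
    _ ≤ d u p' + G.hopEcc d h p' := by
      gcongr
      exact le_hopEcc (G.dist_comm ▸ hpp')

theorem add_hopEcc_le_three_mul_iSup [Finite V] (hsymm : ∀ a b, d a b = d b a)
    (htri : ∀ a b c, d a c ≤ d a b + d b c) (u v : V) :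
    d u v + G.hopEcc d h v ≤ 3 * ⨆ x, d u x := by
  have hecc (x : V) : d u x ≤ ⨆ x, d u x := le_ciSup (Set.finite_range _).bddAbove x
  have hhop : G.hopEcc d h v ≤ 2 * ⨆ x, d u x := hopEcc_le fun x _ =>
    calc d v x ≤ d u v + d u x := hsymm u v ▸ htri v u x
      _ ≤ 2 * ⨆ x, d u x := by linarith [hecc v, hecc x]
  linarith [hecc v]

end SimpleGraph

theorem stmt_6_general {V : Type} [Fintype V] (G : SimpleGraph V)
    (d : V → V → ℝ)
    (hsymm : ∀ a b, d a b = d b a)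
    (htri : ∀ a b c, d a c ≤ d a b + d b c)
    (M : Set V) (h : ℕ) (u : V)
    (hp : ∃ p : V, d u p = sSup (Set.range (d u)) ∧ ∃ p' ∈ M, G.dist p p' ≤ h) :
    let ecch : V → ℝ := fun v => sSup {t : ℝ | ∃ x : V, G.dist v x ≤ h ∧ t = d v x}
    let tecc : ℝ := (1 / 3) * sSup {r : ℝ | ∃ v ∈ M, r = d u v + ecch v}
    sSup (Set.range (d u)) / 3 ≤ tecc ∧ tecc ≤ sSup (Set.range (d u)) := by
  obtain ⟨p, hpecc, p', hp'M, hpp'⟩ := hp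
  set ecc := sSup (Set.range (d u))
  set S := {r : ℝ | ∃ v ∈ M, r = d u v + G.hopEcc d h v}
  change ecc / 3 ≤ 1 / 3 * sSup S ∧ 1 / 3 * sSup S ≤ ecc
  have hbound : ∀ r ∈ S, r ≤ 3 * ecc := by
    rintro r ⟨v, -, rfl⟩
    exact SimpleGraph.add_hopEcc_le_three_mul_iSup hsymm htri u v
  have hlower : ecc ≤ sSup S :=
    hpecc ▸ (SimpleGraph.le_add_hopEcc_of_dist_le htri hpp').trans
      (le_csSup ⟨_, hbound⟩ ⟨p', hp'M, rfl⟩)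
  have hupper : sSup S ≤ 3 * ecc := csSup_le ⟨_, p', hp'M, rfl⟩ hbound
  constructor <;> linarith

/-- 3-approximation of weighted eccentricity. `d` is an abstract weighted
distance (nonnegative, symmetric, triangle inequality), hop distances are those of the
graph `G`. If the farthest node `p` from `u` has a skeleton node `p' ∈ M` within `h`
hops, then `ẽcc(u) = (1/3)·max_{v ∈ M} ( d(u,v) + ecc_h(v) )`, where
`ecc_h(v) = max_{x ∈ N^h(v)} d(v,x)`, satisfies `ecc(u)/3 ≤ ẽcc(u) ≤ ecc(u)`. -/
theorem stmt_6 {V : Type} [Fintype V] [Nonempty V] (G : SimpleGraph V)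
    (hconn : G.Connected)
    (d : V → V → ℝ)
    (hnn : ∀ a b, 0 ≤ d a b)
    (hself : ∀ a, d a a = 0)
    (hsymm : ∀ a b, d a b = d b a)
    (htri : ∀ a b c, d a c ≤ d a b + d b c)
    (M : Set V) (h : ℕ) (u : V)
    (hp : ∃ p : V, d u p = sSup (Set.range (d u)) ∧ ∃ p' ∈ M, G.dist p p' ≤ h) :
    let ecch : V → ℝ := fun v => sSup {t : ℝ | ∃ x : V, G.dist v x ≤ h ∧ t = d v x}
    let tecc : ℝ := (1 / 3) * sSup {r : ℝ | ∃ v ∈ M, r = d u v + ecch v}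
    sSup (Set.range (d u)) / 3 ≤ tecc ∧ tecc ≤ sSup (Set.range (d u)) :=
  stmt_6_general G d hsymm htri M h u hp
end
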